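/- arXiv:2605.03481 — 2 statements merged into one kernel-verified Lean document; each statement's English description precedes it below -/
import Mathlib

section
/- Let n ≥ 3 be an integer, λ ∈ ℝ, k ≥ 2 an integer, h₀, …, h_k ∈ ℝ⁴ and f ∈ ℝ⁴. If the function h(s) := Σ_{m=0}^{k} s^λ·(log s)^m·h_m satisfies (L_Ric h)(s) = s^λ·f for all s ∈ (0,1), then M(n,λ)·h_k = 0 and M′(n,λ)·h_k lies in the column space of M(n,λ). -/
open Matrix

/-- The indicial family `I(D Ric − Λ, λ)` (with `Λ = n`) of the linearized Einstein
operator on asymptotically de Sitter space, in the scalar block decomposition. -/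
noncomputable def M (n : ℕ) (lam : ℝ) : Matrix (Fin 4) (Fin 4) ℝ :=
  (1 / 2 : ℝ) • !![(n : ℝ) * (lam - 2), 0, -(n : ℝ) * lam * (lam - 2), 0;
                   0, 0, 0, 0;
                   2 * (n : ℝ) - lam, 0, lam * (lam - 2 * (n : ℝ)), 0;
                   0, 0, 0, lam * (lam - (n : ℝ))]

/-- `A₂`: the coefficient of `λ²` in `M(n,λ) = A₂λ² + A₁λ + A₀`. -/
noncomputable def A2 (n : ℕ) : Matrix (Fin 4) (Fin 4) ℝ :=
  (1 / 2 : ℝ) • !![0, 0, -(n : ℝ), 0;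
                   0, 0, 0, 0;
                   0, 0, 1, 0;
                   0, 0, 0, 1]

/-- `A₁`: the coefficient of `λ` in `M(n,λ) = A₂λ² + A₁λ + A₀`. -/
noncomputable def A1 (n : ℕ) : Matrix (Fin 4) (Fin 4) ℝ :=
  (1 / 2 : ℝ) • !![(n : ℝ), 0, 2 * (n : ℝ), 0;
                   0, 0, 0, 0;
                   -1, 0, -2 * (n : ℝ), 0;
                   0, 0, 0, -(n : ℝ)]

/-- `A₀`: the constant coefficient in `M(n,λ) = A₂λ² + A₁λ + A₀`. -/
noncomputable def A0 (n : ℕ) : Matrix (Fin 4) (Fin 4) ℝ :=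
  (1 / 2 : ℝ) • !![-2 * (n : ℝ), 0, 0, 0;
                   0, 0, 0, 0;
                   2 * (n : ℝ), 0, 0, 0;
                   0, 0, 0, 0]

/-- The operator `s d/ds` acting on `ℝ⁴`-valued functions of `s`. -/
noncomputable def sD (h : ℝ → (Fin 4 → ℝ)) : ℝ → (Fin 4 → ℝ) :=
  fun s => s • deriv h s

/-- The indicial (Euler) operator
`(L_Ric h)(s) = A₂ (s d/ds)² h(s) + A₁ (s d/ds) h(s) + A₀ h(s)`. -/
noncomputable def LRic (n : ℕ) (h : ℝ → (Fin 4 → ℝ)) : ℝ → (Fin 4 → ℝ) :=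
  fun s => (A2 n).mulVec (sD (sD h) s) + (A1 n).mulVec (sD h s) + (A0 n).mulVec (h s)

/-- The entrywise `j`-th derivative of `M(n,λ)` with respect to `λ`. -/
noncomputable def Mder (n : ℕ) (j : ℕ) (lam : ℝ) : Matrix (Fin 4) (Fin 4) ℝ :=
  Matrix.of fun i k => iteratedDeriv j (fun t : ℝ => M n t i k) lam

/-! Under `s = eˣ` the operator `s d/ds` becomes `d/dx`, so on `s ^ λ • p (log s)` the Euler
operator `A₂ (s d/ds)² + A₁ (s d/ds) + A₀` acts as `M(n, λ + d/dx)` on the vector polynomial `p`.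
By Taylor, `M(n, λ + D) = M(n, λ) + M′(n, λ) D + A₂ D²`, so the coefficients of `xᵏ` and `xᵏ⁻¹` in
the image are `M(n, λ) hₖ` and `M(n, λ) hₖ₋₁ + k M′(n, λ) hₖ`. Both vanish, because the image equals
the constant `f` on `x < 0` and `k - 1 ≥ 1`. -/

open Finset

lemma M_eq (n : ℕ) (t : ℝ) : M n t = t ^ 2 • A2 n + t • A1 n + A0 n := by
  ext i j
  fin_cases i <;> fin_cases j <;>
    simp [M, A2, A1, A0, Matrix.vecHead, Matrix.vecTail] <;> ring

lemma Mder_one (n : ℕ) (lam : ℝ) : Mder n 1 lam = (2 * lam) • A2 n + A1 n := by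
  ext i j
  have hquad : HasDerivAt (fun t : ℝ => M n t i j) (2 * lam * A2 n i j + A1 n i j) lam := by
    simp only [M_eq, Matrix.add_apply, Matrix.smul_apply, smul_eq_mul]
    refine ((((hasDerivAt_pow 2 lam).mul_const (A2 n i j)).fun_add
      ((hasDerivAt_id' lam).mul_const (A1 n i j))).add_const (A0 n i j)).congr_deriv ?_
    norm_num
  simp [Mder, iteratedDeriv_one, hquad.deriv, mul_assoc]

section LogPoly

variable {E : Type*} [NormedAddCommGroup E] [NormedSpace ℝ E]

noncomputable def logPoly (lam : ℝ) (N : ℕ) (c : ℕ → E) (t : ℝ) : E :=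
  ∑ m ∈ range N, (t ^ lam * Real.log t ^ m) • c m

noncomputable def eulerShift (lam : ℝ) (c : ℕ → E) (m : ℕ) : E :=
  lam • c m + ((m : ℝ) + 1) • c (m + 1)

lemma eulerShift_of_le {lam : ℝ} {N : ℕ} {c : ℕ → E} (hc : ∀ m, N ≤ m → c m = 0) :
    ∀ m, N ≤ m → eulerShift lam c m = 0 := by
  intro m hm
  simp [eulerShift, hc m hm, hc (m + 1) (by omega)]

lemma sum_range_pow_pred_smul (x : ℝ) {N : ℕ} {c : ℕ → E} (hN : c N = 0) :
    ∑ m ∈ range N, ((m : ℝ) * x ^ (m - 1)) • c m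
      = ∑ m ∈ range N, (((m : ℝ) + 1) * x ^ m) • c (m + 1) := by
  cases N with
  | zero => simp
  | succ N =>
    rw [sum_range_succ', sum_range_succ, hN]
    simp

lemma hasDerivAt_rpow_mul_log_pow_smul (lam : ℝ) (m : ℕ) (v : E) {s : ℝ} (hs : 0 < s) :
    HasDerivAt (fun t => (t ^ lam * Real.log t ^ m) • v)
      ((s⁻¹ * s ^ lam * (lam * Real.log s ^ m + m * Real.log s ^ (m - 1))) • v) s := by
  have hrpow := Real.hasDerivAt_rpow_const (p := lam) (Or.inl hs.ne')
  have hlog := (Real.hasDerivAt_log hs.ne').fun_pow m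
  convert (hrpow.fun_mul hlog).smul_const v using 2
  rw [Real.rpow_sub_one hs.ne']
  field_simp

lemma hasDerivAt_logPoly (lam : ℝ) {N : ℕ} {c : ℕ → E} (hc : c N = 0) {s : ℝ} (hs : 0 < s) :
    HasDerivAt (logPoly lam N c) (s⁻¹ • logPoly lam N (eulerShift lam c) s) s := by
  convert HasDerivAt.fun_sum (u := range N)
    fun m _ => hasDerivAt_rpow_mul_log_pow_smul lam m (c m) hs using 1
  · ext t; rfl
  set L := Real.log s
  calc s⁻¹ • logPoly lam N (eulerShift lam c) s
      = (s⁻¹ * s ^ lam) • (∑ m ∈ range N, (lam * L ^ m) • c m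
          + ∑ m ∈ range N, (((m : ℝ) + 1) * L ^ m) • c (m + 1)) := by
        simp only [logPoly, eulerShift, smul_sum, ← sum_add_distrib]
        refine sum_congr rfl fun m _ => ?_
        module
    _ = (s⁻¹ * s ^ lam) • (∑ m ∈ range N, (lam * L ^ m) • c m
          + ∑ m ∈ range N, ((m : ℝ) * L ^ (m - 1)) • c m) := by
        rw [sum_range_pow_pred_smul L hc]
    _ = _ := by
        simp only [smul_sum, ← sum_add_distrib]
        refine sum_congr rfl fun m _ => ?_
        module

lemma logPoly_eq_rpow_smul (lam : ℝ) (N : ℕ) (c : ℕ → E) (t : ℝ) :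
    logPoly lam N c t = t ^ lam • ∑ m ∈ range N, Real.log t ^ m • c m := by
  simp only [logPoly, smul_sum, smul_smul]

end LogPoly

open Polynomial in
lemma eq_zero_of_sum_pow_smul_eq_const {ι : Type*} {S : Set ℝ} (hS : S.Infinite) {N : ℕ}
    {d : ℕ → ι → ℝ} {f : ι → ℝ} (h : ∀ x ∈ S, ∑ m ∈ range N, x ^ m • d m = f)
    {m : ℕ} (hm0 : m ≠ 0) (hmN : m < N) : d m = 0 := by
  funext i
  have hpoly : ∑ l ∈ range N, C (d l i) * X ^ l = C (f i) := by
    refine eq_of_infinite_eval_eq _ _ (hS.mono fun x hx => ?_)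
    have hx := congrFun (h x hx) i
    simp only [Finset.sum_apply, Pi.smul_apply, smul_eq_mul] at hx
    simp only [Set.mem_ofPred_eq, eval_finsetSum, eval_mul, eval_C, eval_pow, eval_X, ← hx]
    exact sum_congr rfl fun l _ => mul_comm _ _
  simpa [finsetSum_coeff, coeff_C_mul_X_pow, coeff_C, hm0, hmN] using
    congrArg (coeff · m) hpoly

section EulerOperator

variable {ι : Type*} [Fintype ι]

lemma mulVec_logPoly (A : Matrix ι ι ℝ) (lam : ℝ) (N : ℕ) (c : ℕ → ι → ℝ) (t : ℝ) :
    A *ᵥ logPoly lam N c t = logPoly lam N (fun m => A *ᵥ c m) t := by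
  simp [logPoly, Matrix.mulVec_sum, Matrix.mulVec_smul]

noncomputable def eulerCoeff (A B C : Matrix ι ι ℝ) (lam : ℝ) (c : ℕ → ι → ℝ) (m : ℕ) : ι → ℝ :=
  A *ᵥ eulerShift lam (eulerShift lam c) m + B *ᵥ eulerShift lam c m + C *ᵥ c m

lemma eulerCoeff_eq (A B C : Matrix ι ι ℝ) (lam : ℝ) {c : ℕ → ι → ℝ} {k : ℕ}
    (hc : c (k + 2) = 0) :
    eulerCoeff A B C lam c k = (lam ^ 2 • A + lam • B + C) *ᵥ c k
      + ((k : ℝ) + 1) • (((2 * lam) • A + B) *ᵥ c (k + 1)) := by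
  simp only [eulerCoeff, eulerShift, hc, Matrix.add_mulVec, Matrix.smul_mulVec,
    Matrix.mulVec_add, Matrix.mulVec_smul, smul_zero, add_zero]
  module

end EulerOperator

lemma sD_logPoly (lam : ℝ) {N : ℕ} {c : ℕ → Fin 4 → ℝ} (hc : c N = 0) {s : ℝ} (hs : 0 < s) :
    sD (logPoly lam N c) s = logPoly lam N (eulerShift lam c) s := by
  rw [sD, (hasDerivAt_logPoly lam hc hs).deriv, smul_smul, mul_inv_cancel₀ hs.ne', one_smul]

lemma LRic_logPoly (n : ℕ) (lam : ℝ) {N : ℕ} {c : ℕ → Fin 4 → ℝ}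
    (hc : ∀ m, N ≤ m → c m = 0) {s : ℝ} (hs : 0 < s) :
    LRic n (logPoly lam N c) s = logPoly lam N (eulerCoeff (A2 n) (A1 n) (A0 n) lam c) s := by
  have hsD : sD (logPoly lam N c) =ᶠ[nhds s] logPoly lam N (eulerShift lam c) := by
    filter_upwards [Ioi_mem_nhds hs] with t ht using sD_logPoly lam (hc N le_rfl) ht
  have hsDsD : sD (sD (logPoly lam N c)) s
      = logPoly lam N (eulerShift lam (eulerShift lam c)) s := by
    rw [sD, hsD.deriv_eq, ← sD, sD_logPoly lam (eulerShift_of_le hc N le_rfl) hs]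
  rw [LRic, hsDsD, sD_logPoly lam (hc N le_rfl) hs, mulVec_logPoly, mulVec_logPoly,
    mulVec_logPoly]
  simp only [logPoly, eulerCoeff, ← sum_add_distrib, smul_add]

lemma sum_pow_smul_eulerCoeff_eq (n : ℕ) (lam : ℝ) {N : ℕ} {c : ℕ → Fin 4 → ℝ}
    (hc : ∀ m, N ≤ m → c m = 0) {f : Fin 4 → ℝ}
    (hEq : ∀ s ∈ Set.Ioo (0 : ℝ) 1, LRic n (logPoly lam N c) s = s ^ lam • f) :
    ∀ x ∈ Set.Iio (0 : ℝ),
      ∑ m ∈ range N, x ^ m • eulerCoeff (A2 n) (A1 n) (A0 n) lam c m = f := by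
  intro x hx
  have h := hEq (Real.exp x) ⟨Real.exp_pos x, Real.exp_lt_one_iff.mpr hx⟩
  rw [LRic_logPoly n lam hc (Real.exp_pos x), logPoly_eq_rpow_smul, Real.log_exp] at h
  exact smul_right_injective _ (Real.rpow_pos_of_pos (Real.exp_pos x) lam).ne' h

theorem top_log_coefficient_constraints_general (n : ℕ) (lam : ℝ)
    (k : ℕ) (hk : 2 ≤ k) (hv : ℕ → Fin 4 → ℝ) (f : Fin 4 → ℝ)
    (hEq : ∀ s ∈ Set.Ioo (0 : ℝ) 1,
      LRic n (fun t => ∑ m ∈ Finset.range (k + 1),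
        (t ^ lam * Real.log t ^ m) • hv m) s = s ^ lam • f) :
    (M n lam).mulVec (hv k) = 0 ∧
    (Mder n 1 lam).mulVec (hv k) ∈ LinearMap.range (M n lam).mulVecLin := by
  set c : ℕ → Fin 4 → ℝ := fun m => if m ≤ k then hv m else 0 with hc_def
  have hc : ∀ m, k + 1 ≤ m → c m = 0 := fun m hm => if_neg (by omega)
  have hlog : (fun t => ∑ m ∈ range (k + 1), (t ^ lam * Real.log t ^ m) • hv m)
      = logPoly lam (k + 1) c :=
    funext fun t => sum_congr rfl fun m hm => by
      simp [hc_def, Nat.lt_add_one_iff.mp (mem_range.mp hm)]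
  have hcoeff := fun m => eq_zero_of_sum_pow_smul_eq_const (Set.Iio_infinite 0)
    (sum_pow_smul_eulerCoeff_eq n lam hc (hlog ▸ hEq)) (m := m)
  obtain ⟨j, rfl⟩ : ∃ j, k = j + 2 := ⟨k - 2, by omega⟩
  have htop := hcoeff (j + 2) (by omega) (by omega)
  have hpred := hcoeff (j + 1) (by omega) (by omega)
  rw [eulerCoeff_eq _ _ _ _ (hc _ (by omega)), ← M_eq, ← Mder_one, hc _ le_rfl] at htop
  rw [eulerCoeff_eq _ _ _ _ (hc _ le_rfl), ← M_eq, ← Mder_one] at hpred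
  simp only [hc_def, if_pos (show j + 1 ≤ j + 2 by omega), if_pos le_rfl] at htop hpred
  rw [Matrix.mulVec_zero, smul_zero, add_zero] at htop
  have hpos : (0 : ℝ) < (j + 1 : ℕ) + 1 := by positivity
  refine ⟨htop, -(((j + 1 : ℕ) : ℝ) + 1)⁻¹ • hv (j + 1), ?_⟩
  rw [Matrix.mulVecLin_apply, Matrix.mulVec_smul, eq_neg_of_add_eq_zero_left hpred, smul_neg,
    neg_smul, neg_neg, smul_smul, inv_mul_cancel₀ hpos.ne', one_smul]

/-- If `h(s) = Σ_{m≤k} s^λ (log s)^m h_m` (with `k ≥ 2`) solves `(L_Ric h)(s) = s^λ f`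
on `(0,1)`, then the top log coefficient `h_k` lies in `ker M(n,λ)` and
`M′(n,λ) h_k ∈ ran M(n,λ)`. -/
theorem top_log_coefficient_constraints (n : ℕ) (hn : 3 ≤ n) (lam : ℝ)
    (k : ℕ) (hk : 2 ≤ k) (hv : ℕ → Fin 4 → ℝ) (f : Fin 4 → ℝ)
    (hEq : ∀ s ∈ Set.Ioo (0 : ℝ) 1,
      LRic n (fun t => ∑ m ∈ Finset.range (k + 1),
        (t ^ lam * Real.log t ^ m) • hv m) s = s ^ lam • f) :
    (M n lam).mulVec (hv k) = 0 ∧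
    (Mder n 1 lam).mulVec (hv k) ∈ LinearMap.range (M n lam).mulVecLin :=
  top_log_coefficient_constraints_general n lam k hk hv f hEq
end

section
/- Let n ≥ 3 be an integer, λ > 0 a real number with λ ≠ n, k ∈ ℕ and h₀, …, h_k ∈ ℝ⁴, and set h(s) := Σ_{m=0}^{k} s^λ·(log s)^m·h_m. If (L_Ric h)(s) = 0 for all s > 0, then there exist ω₀, …, ω_k ∈ ℝ² such that, setting ω(s) := Σ_{m=0}^{k} s^λ·(log s)^m·ω_m, one has h(s) + (L_{δ*} ω)(s) = 0 for all s > 0. -/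
open Matrix

/-- `N₁`: the coefficient of `λ` in `D(λ) = N₁λ + N₀`, where `D(λ)` is the indicial
family `I(δ*, λ)` of the symmetric gradient. -/
noncomputable def N1 : Matrix (Fin 4) (Fin 2) ℝ :=
  !![1, 0;
     0, 1 / 2;
     0, 0;
     0, 0]

/-- `N₀`: the constant coefficient in `D(λ) = N₁λ + N₀`. -/
noncomputable def N0 : Matrix (Fin 4) (Fin 2) ℝ :=
  !![0, 0;
     0, 1 / 2;
     1, 0;
     0, 0]

/-- The indicial (Euler) operator of the symmetric gradient,
`(L_{δ*} ω)(s) = N₁ (s ω′(s)) + N₀ ω(s)`. -/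
noncomputable def LDel (ω : ℝ → (Fin 2 → ℝ)) : ℝ → (Fin 4 → ℝ) :=
  fun s => N1.mulVec (s • deriv ω s) + N0.mulVec (ω s)

/-!
Under `s d/ds`, the term `s^λ (log s)^m c_m` becomes `s^λ ((log s)^m λ c_m + m (log s)^(m-1) c_m)`,
so on coefficient sequences `s d/ds` acts as `E = λ + D` with `(D c)_m = (m+1) c_{m+1}` nilpotent
on sequences supported in `[0, k]`; `E - μ` is therefore invertible there whenever `λ ≠ μ`.
Since the functions `s^λ (log s)^m` are linearly independent, `L_Ric h = 0` is the system
`A₂ E² h + A₁ E h + A₀ h = 0` on the coefficients. Its last row is `E (E - n) h³ = 0`, so `h³ = 0`;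
the first row plus `n` times the third is `n (n - 1) (h⁰ - E h²) = 0`. The gauge one-form
`ω = (-h², ω¹)` with `(E + 1) ω¹ = -2 h¹` then cancels `h`.
-/

open Finset

section LogPowSum

variable {V : Type*} [AddCommGroup V] [Module ℝ V]

noncomputable def logPowSum (k : ℕ) (lam : ℝ) (c : ℕ → V) (s : ℝ) : V :=
  ∑ m ∈ range (k + 1), (s ^ lam * Real.log s ^ m) • c m

/-- `s d/ds (s^λ (log s)^m) = s^λ (λ (log s)^m + m (log s)^(m-1))`, read on coefficients. -/
noncomputable def sDCoeff (lam : ℝ) (c : ℕ → V) : ℕ → V :=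
  fun m => lam • c m + ((m : ℝ) + 1) • c (m + 1)

lemma sDCoeff_eq_zero_of_lt {k : ℕ} {lam : ℝ} {c : ℕ → V} (hc : ∀ m, k < m → c m = 0)
    (m : ℕ) (hm : k < m) : sDCoeff lam c m = 0 := by
  simp [sDCoeff, hc m hm, hc (m + 1) (by omega)]

lemma eq_zero_of_sDCoeff_eq_zero {k : ℕ} {lam : ℝ} {c : ℕ → V} (hlam : lam ≠ 0)
    (hc : ∀ m, k < m → c m = 0) (h : sDCoeff lam c = 0) : c = 0 := by
  suffices ∀ j m, k < m + j → c m = 0 from funext fun m => this (k + 1) m (by omega)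
  intro j
  induction j with
  | zero => exact hc
  | succ j ih =>
    intro m hm
    have hm1 : c (m + 1) = 0 := ih (m + 1) (by omega)
    have := congrFun h m
    simp only [sDCoeff, hm1, smul_zero, add_zero, Pi.zero_apply] at this
    exact (smul_eq_zero.mp this).resolve_left hlam

noncomputable def sDCoeffInv (lam : ℝ) (k : ℕ) (b : ℕ → V) (m : ℕ) : V :=
  if m ≤ k then lam⁻¹ • (b m - ((m : ℝ) + 1) • sDCoeffInv lam k b (m + 1)) else 0
termination_by k + 1 - m

lemma sDCoeffInv_eq_zero_of_lt {lam : ℝ} {k : ℕ} {b : ℕ → V} (m : ℕ) (hm : k < m) :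
    sDCoeffInv lam k b m = 0 := by
  rw [sDCoeffInv, if_neg (by omega)]

lemma sDCoeff_sDCoeffInv {lam : ℝ} {k : ℕ} {b : ℕ → V} (hlam : lam ≠ 0)
    (hb : ∀ m, k < m → b m = 0) : sDCoeff lam (sDCoeffInv lam k b) = b := by
  funext m
  by_cases hm : m ≤ k
  · rw [sDCoeff, sDCoeffInv, if_pos hm, smul_inv_smul₀ hlam, sub_add_cancel]
  · rw [sDCoeff, sDCoeffInv_eq_zero_of_lt m (by omega),
      sDCoeffInv_eq_zero_of_lt (m + 1) (by omega), hb m (by omega)]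
    simp

lemma logPowSum_add (k : ℕ) (lam : ℝ) (c c' : ℕ → V) (s : ℝ) :
    logPowSum k lam c s + logPowSum k lam c' s = logPowSum k lam (c + c') s := by
  simp only [logPowSum, ← sum_add_distrib, Pi.add_apply, smul_add]

lemma map_logPowSum {W : Type*} [AddCommGroup W] [Module ℝ W] (f : V →ₗ[ℝ] W) (k : ℕ)
    (lam : ℝ) (c : ℕ → V) (s : ℝ) :
    f (logPowSum k lam c s) = logPowSum k lam (f ∘ c) s := by
  simp only [logPowSum, map_sum, map_smul, Function.comp_apply]

lemma logPowSum_indicator (k : ℕ) (lam : ℝ) (c : ℕ → V) :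
    logPowSum k lam ((Set.Iic k).indicator c) = logPowSum k lam c := by
  funext s
  refine sum_congr rfl fun m hm => ?_
  rw [Set.indicator_of_mem (Set.mem_Iic.mpr (Nat.lt_succ_iff.mp (mem_range.mp hm)))]

lemma sum_range_mul_pow_pred_smul (k : ℕ) (x : ℝ) (c : ℕ → V) (hc : c (k + 1) = 0) :
    ∑ m ∈ range (k + 1), ((m : ℝ) * x ^ (m - 1)) • c m
      = ∑ m ∈ range (k + 1), (((m : ℝ) + 1) * x ^ m) • c (m + 1) := by
  rw [sum_range_succ', sum_range_succ, hc]
  simp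

end LogPowSum

lemma hasDerivAt_rpow_mul_log_pow (lam : ℝ) (m : ℕ) {s : ℝ} (hs : 0 < s) :
    HasDerivAt (fun t => t ^ lam * Real.log t ^ m)
      (s⁻¹ * (s ^ lam * (lam * Real.log s ^ m + m * Real.log s ^ (m - 1)))) s := by
  refine ((Real.hasDerivAt_rpow_const (p := lam) (Or.inl hs.ne')).mul
    ((Real.hasDerivAt_log hs.ne').pow m)).congr_deriv ?_
  simp only [Pi.pow_apply, Real.rpow_sub_one hs.ne']
  field_simp

section Calculus

variable {V : Type*} [NormedAddCommGroup V] [NormedSpace ℝ V]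

lemma smul_deriv_logPowSum {k : ℕ} {lam : ℝ} {c : ℕ → V} (hc : c (k + 1) = 0) {s : ℝ}
    (hs : 0 < s) :
    s • deriv (logPowSum k lam c) s = logPowSum k lam (sDCoeff lam c) s := by
  set L := Real.log s
  have hderiv : HasDerivAt (logPowSum k lam c) (∑ m ∈ range (k + 1),
      (s⁻¹ * (s ^ lam * (lam * L ^ m + m * L ^ (m - 1)))) • c m) s :=
    HasDerivAt.fun_sum fun m _ => (hasDerivAt_rpow_mul_log_pow lam m hs).smul_const (c m)
  calc s • deriv (logPowSum k lam c) s
      = ∑ m ∈ range (k + 1), (s ^ lam * L ^ m) • lam • c m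
          + s ^ lam • ∑ m ∈ range (k + 1), ((m : ℝ) * L ^ (m - 1)) • c m := by
        rw [hderiv.deriv, smul_sum, smul_sum, ← sum_add_distrib]
        refine sum_congr rfl fun m _ => ?_
        simp only [smul_smul, ← add_smul]
        congr 1
        field_simp
    _ = logPowSum k lam (sDCoeff lam c) s := by
        rw [sum_range_mul_pow_pred_smul k L c hc, smul_sum, ← sum_add_distrib]
        refine sum_congr rfl fun m _ => ?_
        simp only [sDCoeff, smul_add, smul_smul]
        congr 2
        ring

end Calculus

lemma eq_zero_of_forall_sum_mul_pow_eq_zero {k : ℕ} {a : ℕ → ℝ}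
    (h : ∀ x : ℝ, ∑ j ∈ range (k + 1), a j * x ^ j = 0) {m : ℕ} (hm : m ≤ k) : a m = 0 := by
  set p : Polynomial ℝ := ∑ j ∈ range (k + 1), Polynomial.C (a j) * Polynomial.X ^ j
  have hp : p = 0 := Polynomial.funext fun x => by simpa [p, Polynomial.eval_finsetSum] using h x
  simpa [p, Polynomial.finsetSum_coeff, Polynomial.coeff_C_mul_X_pow, Nat.lt_succ_of_le hm]
    using congrArg (Polynomial.coeff · m) hp

lemma eq_zero_of_logPowSum_eq_zero {ι : Type*} {k : ℕ} {lam : ℝ} {c : ℕ → ι → ℝ}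
    (h : ∀ s, 0 < s → logPowSum k lam c s = 0) {m : ℕ} (hm : m ≤ k) : c m = 0 := by
  funext i
  refine eq_zero_of_forall_sum_mul_pow_eq_zero (a := fun j => c j i) (fun x => ?_) hm
  have hx := congrFun (h (Real.exp x) (Real.exp_pos x)) i
  simp only [logPowSum, Real.log_exp, Finset.sum_apply, Pi.smul_apply, smul_eq_mul,
    Pi.zero_apply] at hx
  have key : Real.exp x ^ lam * ∑ j ∈ range (k + 1), c j i * x ^ j = 0 := by
    rw [mul_sum, ← hx]
    exact sum_congr rfl fun j _ => by ring
  exact (mul_eq_zero.mp key).resolve_left (Real.rpow_pos_of_pos (Real.exp_pos x) lam).ne'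

noncomputable def ricCoeff (n : ℕ) (lam : ℝ) (c : ℕ → Fin 4 → ℝ) : ℕ → Fin 4 → ℝ :=
  fun m => A2 n *ᵥ sDCoeff lam (sDCoeff lam c) m + A1 n *ᵥ sDCoeff lam c m + A0 n *ᵥ c m

noncomputable def delCoeff (lam : ℝ) (ω : ℕ → Fin 2 → ℝ) : ℕ → Fin 4 → ℝ :=
  fun m => N1 *ᵥ sDCoeff lam ω m + N0 *ᵥ ω m

lemma LRic_logPowSum {n k : ℕ} {lam : ℝ} {c : ℕ → Fin 4 → ℝ} (hc : ∀ m, k < m → c m = 0)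
    {s : ℝ} (hs : 0 < s) :
    LRic n (logPowSum k lam c) s = logPowSum k lam (ricCoeff n lam c) s := by
  have h1 : ∀ t, 0 < t → sD (logPowSum k lam c) t = logPowSum k lam (sDCoeff lam c) t :=
    fun t ht => smul_deriv_logPowSum (hc (k + 1) (by omega)) ht
  have h2 :
      sD (sD (logPowSum k lam c)) s = logPowSum k lam (sDCoeff lam (sDCoeff lam c)) s := by
    have hev : sD (logPowSum k lam c) =ᶠ[nhds s] logPowSum k lam (sDCoeff lam c) :=
      Filter.eventually_of_mem (Ioi_mem_nhds hs) h1
    rw [sD, hev.deriv_eq]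
    exact smul_deriv_logPowSum (sDCoeff_eq_zero_of_lt hc (k + 1) (by omega)) hs
  simp only [LRic, h2, h1 s hs, ← Matrix.mulVecLin_apply, map_logPowSum, logPowSum_add]
  rfl

lemma LDel_logPowSum {k : ℕ} {lam : ℝ} {ω : ℕ → Fin 2 → ℝ} (hω : ω (k + 1) = 0) {s : ℝ}
    (hs : 0 < s) : LDel (logPowSum k lam ω) s = logPowSum k lam (delCoeff lam ω) s := by
  simp only [LDel, smul_deriv_logPowSum hω hs, ← Matrix.mulVecLin_apply, map_logPowSum,
    logPowSum_add]
  rfl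

lemma ricCoeff_eq_zero_of_LRic_eq_zero {n k : ℕ} {lam : ℝ} {c : ℕ → Fin 4 → ℝ}
    (hc : ∀ m, k < m → c m = 0)
    (h : ∀ s, 0 < s → LRic n (logPowSum k lam c) s = 0) : ricCoeff n lam c = 0 := by
  funext m
  rcases le_or_gt m k with hm | hm
  · exact eq_zero_of_logPowSum_eq_zero
      (fun s hs => (LRic_logPowSum hc hs).symm.trans (h s hs)) hm
  · have h1 := sDCoeff_eq_zero_of_lt (lam := lam) hc
    simp [ricCoeff, hc m hm, h1 m hm, sDCoeff_eq_zero_of_lt h1 m hm]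

lemma ricCoeff_apply_three (n : ℕ) (lam : ℝ) (c : ℕ → Fin 4 → ℝ) (m : ℕ) :
    ricCoeff n lam c m 3 = 2⁻¹ * sDCoeff lam (sDCoeff (lam - n) fun j => c j 3) m := by
  simp [ricCoeff, sDCoeff, dotProduct, Fin.sum_univ_four, A2, A1, A0]
  ring

/-- Rows `0` and `2` are `(n/2) (E - 2) w` and `-(1/2) (E - 2n) w` with `w = h⁰ - E h²`. -/
lemma ricCoeff_apply_zero_add_mul_apply_two (n : ℕ) (lam : ℝ) (c : ℕ → Fin 4 → ℝ) (m : ℕ) :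
    ricCoeff n lam c m 0 + n * ricCoeff n lam c m 2
      = n * (n - 1) * (c m 0 - sDCoeff lam (fun j => c j 2) m) := by
  simp [ricCoeff, sDCoeff, dotProduct, Fin.sum_univ_four, A2, A1, A0]
  ring

lemma apply_three_eq_zero_of_ricCoeff_eq_zero {n k : ℕ} {lam : ℝ} {c : ℕ → Fin 4 → ℝ}
    (hlam : lam ≠ 0) (hne : lam ≠ n) (hc : ∀ m, k < m → c m = 0) (h : ricCoeff n lam c = 0)
    (m : ℕ) : c m 3 = 0 := by
  set c3 : ℕ → ℝ := fun j => c j 3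
  have hc3 : ∀ m, k < m → c3 m = 0 := fun m hm => by simp [c3, hc m hm]
  have hE : sDCoeff lam (sDCoeff (lam - n) c3) = 0 := funext fun m => by
    simpa [h] using ricCoeff_apply_three n lam c m
  have := eq_zero_of_sDCoeff_eq_zero (sub_ne_zero.mpr hne) hc3
    (eq_zero_of_sDCoeff_eq_zero hlam (sDCoeff_eq_zero_of_lt hc3) hE)
  exact congrFun this m

lemma apply_zero_eq_of_ricCoeff_eq_zero {n : ℕ} {lam : ℝ} {c : ℕ → Fin 4 → ℝ} (hn : 2 ≤ n)
    (h : ricCoeff n lam c = 0) (m : ℕ) : c m 0 = sDCoeff lam (fun j => c j 2) m := by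
  have key := ricCoeff_apply_zero_add_mul_apply_two n lam c m
  simp only [h, Pi.zero_apply, mul_zero, add_zero] at key
  have hn' : (n : ℝ) * (n - 1) ≠ 0 := by
    have : (2 : ℝ) ≤ n := by exact_mod_cast hn
    nlinarith
  exact sub_eq_zero.mp ((mul_eq_zero.mp key.symm).resolve_left hn')

lemma exists_add_delCoeff_eq_zero {k : ℕ} {lam : ℝ} {c : ℕ → Fin 4 → ℝ} (hlam : lam + 1 ≠ 0)
    (hc : ∀ m, k < m → c m = 0) (h3 : ∀ m, c m 3 = 0)
    (h0 : ∀ m, c m 0 = sDCoeff lam (fun j => c j 2) m) :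
    ∃ ω : ℕ → Fin 2 → ℝ, (∀ m, k < m → ω m = 0) ∧ c + delCoeff lam ω = 0 := by
  set q := sDCoeffInv (lam + 1) k fun j => -2 * c j 1
  have hq : sDCoeff (lam + 1) q = fun j => -2 * c j 1 :=
    sDCoeff_sDCoeffInv hlam fun m hm => by simp [hc m hm]
  refine ⟨fun m => ![-c m 2, q m], fun m hm => ?_, funext fun m => ?_⟩
  · ext i
    fin_cases i <;> simp [hc m hm, q, sDCoeffInv_eq_zero_of_lt m hm]
  · have hqm := congrFun hq m
    ext i
    fin_cases i <;> simp [delCoeff, sDCoeff, N1, N0, h3, h0] at hqm ⊢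
    · ring
    · linear_combination hqm / 2

/-- Solving away log terms at a non-exceptional weight `λ > 0`, `λ ≠ n`, by a pure
gauge term: if `h(s) = Σ_{m≤k} s^λ (log s)^m h_m` satisfies `L_Ric h = 0` on `(0,∞)`,
then there are `ω_m` with `h + L_{δ*} ω = 0`, where
`ω(s) = Σ_{m≤k} s^λ (log s)^m ω_m`. -/
theorem solve_order_lambda_by_gauge (n : ℕ) (hn : 3 ≤ n) (lam : ℝ)
    (hpos : 0 < lam) (hne : lam ≠ (n : ℝ)) (k : ℕ) (hv : ℕ → Fin 4 → ℝ)
    (hEq : ∀ s : ℝ, 0 < s →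
      LRic n (fun t => ∑ m ∈ Finset.range (k + 1),
        (t ^ lam * Real.log t ^ m) • hv m) s = 0) :
    ∃ ω : ℕ → Fin 2 → ℝ, ∀ s : ℝ, 0 < s →
      (∑ m ∈ Finset.range (k + 1), (s ^ lam * Real.log s ^ m) • hv m)
        + LDel (fun t => ∑ m ∈ Finset.range (k + 1),
            (t ^ lam * Real.log t ^ m) • ω m) s = 0 := by
  set c := (Set.Iic k).indicator hv
  have hc : ∀ m, k < m → c m = 0 := fun m hm => Set.indicator_of_notMem (by simpa using hm) hv
  have hsum : logPowSum k lam c = logPowSum k lam hv := logPowSum_indicator k lam hv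
  have hric : ricCoeff n lam c = 0 :=
    ricCoeff_eq_zero_of_LRic_eq_zero hc fun s hs => by rw [hsum]; exact hEq s hs
  obtain ⟨ω, hω, hgauge⟩ := exists_add_delCoeff_eq_zero (by linarith) hc
    (apply_three_eq_zero_of_ricCoeff_eq_zero hpos.ne' hne hc hric)
    (apply_zero_eq_of_ricCoeff_eq_zero (by omega) hric)
  refine ⟨ω, fun s hs => ?_⟩
  change logPowSum k lam hv s + LDel (logPowSum k lam ω) s = 0
  rw [← hsum, LDel_logPowSum (hω (k + 1) (by omega)) hs, logPowSum_add, hgauge]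
  simp [logPowSum]
end
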